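/- Loop rule for upper bounds (Park induction for the characteristic function): for every post-expectation E : Σ → ℝ≥0∞ and every expectation I : Σ → ℝ≥0∞ with Φ_E I ≤ I pointwise, the weakest pre-expectation of the loop is bounded by I: lfp Φ_E ≤ I pointwise; hence by the identification of lfp Φ_E with the expected value of E over the loop's output sub-distribution, ∑' τ, W σ τ * E τ ≤ I σ for every σ. -/

import Mathlib

/-!
Park induction gives `lfp Φ_E ≤ I`. For the output distribution, the expected value of `E`
after `n` stopped steps is the Kleene iterate `Φ_E^[n+1] ⊥`, hence lies below `lfp Φ_E`; the
kernels `μ_n` increase with `n`, so by monotone convergence the expected value of `E` under `W`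
is the supremum of these iterates.
-/

open ENNReal

/-- The characteristic function of the loop `while G do body` with respect to
post-expectation `E`. -/
noncomputable def Phi {S : Type*} (G : S → Prop) [DecidablePred G] (body : S → PMF S)
    (E : S → ℝ≥0∞) (X : S → ℝ≥0∞) : S → ℝ≥0∞ :=
  fun σ => if G σ then ∑' τ, body σ τ * X τ else E σ

theorem Phi_monotone {S : Type*} (G : S → Prop) [DecidablePred G] (body : S → PMF S)
    (E : S → ℝ≥0∞) : Monotone (Phi G body E) := by
  intro X Y hXY σ
  simp only [Phi]
  split
  · exact ENNReal.tsum_le_tsum fun τ => by have h := hXY τ; gcongr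
  · exact le_rfl

/-- The characteristic function, bundled as a monotone map on the complete
lattice of expectations. -/
noncomputable def PhiHom {S : Type*} (G : S → Prop) [DecidablePred G] (body : S → PMF S)
    (E : S → ℝ≥0∞) : (S → ℝ≥0∞) →o (S → ℝ≥0∞) :=
  ⟨Phi G body E, Phi_monotone G body E⟩

/-- The stopped `n`-step kernels of the loop `while G do body`. -/
noncomputable def mu {S : Type*} (G : S → Prop) [DecidablePred G] [DecidableEq S]
    (body : S → PMF S) : ℕ → S → S → ℝ≥0∞
  | 0 => fun σ τ => if ¬ G σ ∧ τ = σ then 1 else 0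
  | n + 1 => fun σ =>
      if G σ then (fun τ => ∑' σ', body σ σ' * mu G body n σ' τ) else mu G body 0 σ

/-- The loop's output sub-distribution. -/
noncomputable def W {S : Type*} (G : S → Prop) [DecidablePred G] [DecidableEq S]
    (body : S → PMF S) (σ τ : S) : ℝ≥0∞ :=
  ⨆ n, mu G body n σ τ

theorem ENNReal.tsum_iSup_of_monotone {α ι : Type*} [Preorder ι] [IsDirectedOrder ι]
    {f : ι → α → ℝ≥0∞} (hf : Monotone f) : ∑' a, ⨆ i, f i a = ⨆ i, ∑' a, f i a := by
  simp_rw [ENNReal.tsum_eq_iSup_sum,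
    ENNReal.finsetSum_iSup_of_monotone fun a _ _ hij => hf hij a]
  exact iSup_comm

section Loop

variable {S : Type*} {G : S → Prop} [DecidablePred G] [DecidableEq S] {body : S → PMF S}

theorem mu_succ_of_guard {σ : S} (h : G σ) (n : ℕ) (τ : S) :
    mu G body (n + 1) σ τ = ∑' σ', body σ σ' * mu G body n σ' τ := by
  simp [mu, h]

theorem mu_succ_of_not_guard {σ : S} (h : ¬ G σ) (n : ℕ) :
    mu G body (n + 1) σ = mu G body 0 σ := by
  simp [mu, h]

theorem mu_monotone : Monotone (mu G body) := by
  refine monotone_nat_of_le_succ fun n => ?_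
  induction n with
  | zero =>
    intro σ τ
    by_cases h : G σ
    · simp [mu, h]
    · rw [mu_succ_of_not_guard h]
  | succ n ih =>
    intro σ τ
    by_cases h : G σ
    · rw [mu_succ_of_guard h, mu_succ_of_guard h]
      gcongr with σ'
      exact ih σ' τ
    · rw [mu_succ_of_not_guard h, mu_succ_of_not_guard h]

variable (E : S → ℝ≥0∞)

theorem tsum_mu_zero_mul :
    (fun σ => ∑' τ, mu G body 0 σ τ * E τ) = Phi G body E ⊥ := by
  ext σ
  rw [tsum_eq_single σ fun τ hτ => by simp [mu, hτ]]
  by_cases h : G σ <;> simp [mu, Phi, h]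

theorem tsum_mu_succ_mul (n : ℕ) :
    (fun σ => ∑' τ, mu G body (n + 1) σ τ * E τ) =
      Phi G body E (fun σ => ∑' τ, mu G body n σ τ * E τ) := by
  ext σ
  by_cases h : G σ
  · simp only [Phi, if_pos h, mu_succ_of_guard h, ← ENNReal.tsum_mul_right,
      ← ENNReal.tsum_mul_left, mul_assoc]
    exact ENNReal.tsum_comm
  · rw [mu_succ_of_not_guard h, congrFun (tsum_mu_zero_mul E) σ]
    simp [Phi, h]

theorem tsum_mu_mul_le_lfp (n : ℕ) :
    (fun σ => ∑' τ, mu G body n σ τ * E τ) ≤ OrderHom.lfp (PhiHom G body E) := by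
  induction n with
  | zero => rw [tsum_mu_zero_mul]; exact (PhiHom G body E).map_le_lfp bot_le
  | succ n ih => rw [tsum_mu_succ_mul]; exact (PhiHom G body E).map_le_lfp ih

theorem tsum_W_mul_le_lfp (σ : S) :
    ∑' τ, W G body σ τ * E τ ≤ OrderHom.lfp (PhiHom G body E) σ := by
  have hmono : Monotone fun n τ => mu G body n σ τ * E τ :=
    fun _ _ hmn τ => mul_le_mul_left (mu_monotone hmn σ τ) (E τ)
  simp only [W, ENNReal.iSup_mul]
  rw [ENNReal.tsum_iSup_of_monotone hmono]
  exact iSup_le fun n => tsum_mu_mul_le_lfp E n σ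

end Loop

theorem park_induction_upper_bound_general {S : Type*} [DecidableEq S]
    (G : S → Prop) [DecidablePred G] (body : S → PMF S)
    (E : S → ℝ≥0∞) (I : S → ℝ≥0∞)
    (hI : ∀ σ, Phi G body E I σ ≤ I σ) :
    (∀ σ, OrderHom.lfp (PhiHom G body E) σ ≤ I σ) ∧
    (∀ σ, ∑' τ, W G body σ τ * E τ ≤ I σ) := by
  have lfp_le_I : OrderHom.lfp (PhiHom G body E) ≤ I := OrderHom.lfp_le _ hI
  exact ⟨lfp_le_I, fun σ => (tsum_W_mul_le_lfp E σ).trans (lfp_le_I σ)⟩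

/-- loop rule for upper bounds (Park induction): any pre-fixed
point of the characteristic function upper-bounds the weakest pre-expectation,
and hence the expected value of the post-expectation over the loop's output
sub-distribution. -/
theorem park_induction_upper_bound {S : Type*} [Countable S] [DecidableEq S]
    (G : S → Prop) [DecidablePred G] (body : S → PMF S)
    (E : S → ℝ≥0∞) (I : S → ℝ≥0∞)
    (hI : ∀ σ, Phi G body E I σ ≤ I σ) :
    (∀ σ, OrderHom.lfp (PhiHom G body E) σ ≤ I σ) ∧
    (∀ σ, ∑' τ, W G body σ τ * E τ ≤ I σ) :=
  park_induction_upper_bound_general G body E I hI
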